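/- arXiv:2006.05553 — 6 statements merged into one kernel-verified Lean document; each statement's English description precedes it below -/
import Mathlib

section
/- Let P and Q be probability measures on a measurable space Ω with P absolutely continuous with respect to Q, let r = dP/dQ, and assume r > 0 Q-almost everywhere and that log r is integrable with respect to P. Then for the function m = 1 + log r one has ∫ m dP − e^{−1} ∫ e^{m} dQ = KL(P‖Q); that is, the Nguyen–Wainwright–Jordan functional attains the value KL(P‖Q) at m* = 1 + log(dP/dQ). -/
open MeasureTheory

/-- The Nguyen–Wainwright–Jordan functional attains the value `KL(P‖Q)` at
`m* = 1 + log (dP/dQ)`. -/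
theorem stmt_1 {Ω : Type*} [MeasurableSpace Ω]
    (P Q : Measure Ω) [IsProbabilityMeasure P] [IsProbabilityMeasure Q]
    (hPQ : P ≪ Q)
    (hpos : ∀ᵐ ω ∂Q, 0 < (P.rnDeriv Q ω).toReal)
    (hint : Integrable (fun ω => Real.log ((P.rnDeriv Q ω).toReal)) P) :
    (∫ ω, (1 + Real.log ((P.rnDeriv Q ω).toReal)) ∂P)
        - Real.exp (-1) * ∫ ω, Real.exp (1 + Real.log ((P.rnDeriv Q ω).toReal)) ∂Q
      = ∫ ω, Real.log ((P.rnDeriv Q ω).toReal) ∂P := by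
  have h1 : ∫ ω, (1 + Real.log ((P.rnDeriv Q ω).toReal)) ∂P
      = 1 + ∫ ω, Real.log ((P.rnDeriv Q ω).toReal) ∂P := by
    rw [integral_add (integrable_const 1) hint]; simp
  have h2 : ∫ ω, Real.exp (1 + Real.log ((P.rnDeriv Q ω).toReal)) ∂Q
      = Real.exp 1 * ∫ ω, (P.rnDeriv Q ω).toReal ∂Q := by
    rw [← integral_const_mul]
    apply integral_congr_ae
    filter_upwards [hpos] with ω hω
    rw [Real.exp_add, Real.exp_log hω]
  have h3 : ∫ ω, (P.rnDeriv Q ω).toReal ∂Q = 1 := by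
    rw [Measure.integral_toReal_rnDeriv hPQ]; simp
  rw [h1, h2, h3, mul_one, ← Real.exp_add]
  simp
end

section
/- Let P and Q be mutually absolutely continuous probability measures on a measurable space Ω, let r = dP/dQ, and assume r > 0 Q-almost everywhere. Assume log(r/(1+r)) is integrable with respect to P and log(1+r) is integrable with respect to Q. Then for every measurable function m : Ω → ℝ such that softplus(−m) := log(1 + e^{−m}) is integrable with respect to P and softplus(m) := log(1 + e^{m}) is integrable with respect to Q, one has ∫ −log(1 + e^{−m}) dP − ∫ log(1 + e^{m}) dQ ≤ ∫ log(r/(1+r)) dP − ∫ log(1+r) dQ; that is, the Jensen–Shannon f-GAN functional is maximized by m* = log(dP/dQ). -/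
open MeasureTheory

lemma key_pointwise_stmt4 (r x : ℝ) (hr : 0 < r) :
    r * (-Real.log (1 + Real.exp (-x))) - Real.log (1 + Real.exp x)
      ≤ r * Real.log (r / (1 + r)) - Real.log (1 + r) := by
  have he : 0 < Real.exp x := Real.exp_pos x
  have hen : 0 < Real.exp (-x) := Real.exp_pos _
  have h1e : (0:ℝ) < 1 + Real.exp x := by linarith
  have h1en : (0:ℝ) < 1 + Real.exp (-x) := by linarith
  have h1r : (0:ℝ) < 1 + r := by linarith
  set a : ℝ := (1 + Real.exp (-x)) * (r / (1 + r)) with ha_def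
  set b : ℝ := (1 + Real.exp x) / (1 + r) with hb_def
  have ha : 0 < a := by positivity
  have hb : 0 < b := by positivity
  have h1 : 1 - a⁻¹ ≤ Real.log a := by
    have := Real.log_le_sub_one_of_pos (inv_pos.mpr ha)
    rw [Real.log_inv] at this; linarith
  have h2 : 1 - b⁻¹ ≤ Real.log b := by
    have := Real.log_le_sub_one_of_pos (inv_pos.mpr hb)
    rw [Real.log_inv] at this; linarith
  have hexp : Real.exp (-x) = (Real.exp x)⁻¹ := Real.exp_neg x
  have hzero : r * (1 - a⁻¹) + (1 - b⁻¹) = 0 := by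
    rw [ha_def, hb_def, hexp]
    field_simp
    ring
  have hmain : 0 ≤ r * Real.log a + Real.log b := by
    nlinarith [mul_le_mul_of_nonneg_left h1 hr.le]
  have hla : Real.log a = Real.log (1 + Real.exp (-x)) + Real.log (r / (1 + r)) :=
    Real.log_mul (ne_of_gt h1en) (ne_of_gt (by positivity))
  have hlb : Real.log b = Real.log (1 + Real.exp x) - Real.log (1 + r) :=
    Real.log_div (ne_of_gt h1e) (ne_of_gt h1r)
  rw [hla, hlb] at hmain
  nlinarith

/-- The Jensen–Shannon f-GAN functional is maximized at `m* = log (dP/dQ)`: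
for mutually absolutely continuous probability measures `P`, `Q` with `r = dP/dQ > 0`
`Q`-a.e., and any measurable `m` with the required integrability,
`∫ −log(1+e^{−m}) dP − ∫ log(1+e^{m}) dQ ≤ ∫ log(r/(1+r)) dP − ∫ log(1+r) dQ`. -/
theorem stmt_4 {Ω : Type*} [MeasurableSpace Ω]
    (P Q : Measure Ω) [IsProbabilityMeasure P] [IsProbabilityMeasure Q]
    (hPQ : P ≪ Q) (hQP : Q ≪ P)
    (hpos : ∀ᵐ ω ∂Q, 0 < (P.rnDeriv Q ω).toReal)
    (hintP : Integrable
      (fun ω => Real.log ((P.rnDeriv Q ω).toReal / (1 + (P.rnDeriv Q ω).toReal))) P)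
    (hintQ : Integrable (fun ω => Real.log (1 + (P.rnDeriv Q ω).toReal)) Q)
    (m : Ω → ℝ) (hm : Measurable m)
    (hsoftP : Integrable (fun ω => Real.log (1 + Real.exp (-(m ω)))) P)
    (hsoftQ : Integrable (fun ω => Real.log (1 + Real.exp (m ω))) Q) :
    (∫ ω, -Real.log (1 + Real.exp (-(m ω))) ∂P) - ∫ ω, Real.log (1 + Real.exp (m ω)) ∂Q
      ≤ (∫ ω, Real.log ((P.rnDeriv Q ω).toReal / (1 + (P.rnDeriv Q ω).toReal)) ∂P)
          - ∫ ω, Real.log (1 + (P.rnDeriv Q ω).toReal) ∂Q := by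
  have hA : (∫ ω, -Real.log (1 + Real.exp (-(m ω))) ∂P)
      = ∫ ω, (P.rnDeriv Q ω).toReal • (-Real.log (1 + Real.exp (-(m ω)))) ∂Q :=
    (integral_rnDeriv_smul hPQ).symm
  have hC : (∫ ω, Real.log ((P.rnDeriv Q ω).toReal / (1 + (P.rnDeriv Q ω).toReal)) ∂P)
      = ∫ ω, (P.rnDeriv Q ω).toReal •
          Real.log ((P.rnDeriv Q ω).toReal / (1 + (P.rnDeriv Q ω).toReal)) ∂Q :=
    (integral_rnDeriv_smul hPQ).symm
  rw [hA, hC]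
  have hiA : Integrable
      (fun ω => (P.rnDeriv Q ω).toReal • (-Real.log (1 + Real.exp (-(m ω))))) Q :=
    (integrable_rnDeriv_smul_iff hPQ).mpr hsoftP.neg
  have hiC : Integrable (fun ω => (P.rnDeriv Q ω).toReal •
      Real.log ((P.rnDeriv Q ω).toReal / (1 + (P.rnDeriv Q ω).toReal))) Q :=
    (integrable_rnDeriv_smul_iff hPQ).mpr hintP
  rw [← integral_sub hiA hsoftQ, ← integral_sub hiC hintQ]
  refine integral_mono_ae (hiA.sub hsoftQ) (hiC.sub hintQ) ?_
  filter_upwards [hpos] with ω hω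
  simpa [smul_eq_mul] using key_pointwise_stmt4 ((P.rnDeriv Q ω).toReal) (m ω) hω
end

section
/- Let p > 0 and q > 0 be real numbers. The function g(t) = −p·log(1 + e^{−t}) − q·log(1 + e^{t}) satisfies g(t) ≤ p·log(p/(p+q)) + q·log(q/(p+q)) for all t ∈ ℝ, with equality if and only if t = log(p/q). (Pointwise optimality of the log-density-ratio for the Jensen–Shannon f-GAN objective.) -/
private lemma gibbs_aux (p q x y : ℝ) (hp : 0 < p) (hq : 0 < q) (hx : 0 < x) (hy : 0 < y)
    (hsum : p * x + q * y = p + q) :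
    p * Real.log x + q * Real.log y ≤ 0 ∧
      (x ≠ 1 → p * Real.log x + q * Real.log y < 0) := by
  have h1 : Real.log x ≤ x - 1 := Real.log_le_sub_one_of_pos hx
  have h2 : Real.log y ≤ y - 1 := Real.log_le_sub_one_of_pos hy
  constructor
  · nlinarith [mul_le_mul_of_nonneg_left h1 hp.le, mul_le_mul_of_nonneg_left h2 hq.le]
  · intro hne
    have h1' : Real.log x < x - 1 := Real.log_lt_sub_one_of_pos hx hne
    nlinarith [mul_lt_mul_of_pos_left h1' hp, mul_le_mul_of_nonneg_left h2 hq.le]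

/-- Pointwise optimality of the log-density-ratio for the Jensen–Shannon f-GAN objective:
for `p, q > 0`, the function `g(t) = −p·log(1+e^{−t}) − q·log(1+e^{t})` satisfies
`g(t) ≤ p·log(p/(p+q)) + q·log(q/(p+q))` with equality iff `t = log(p/q)`. -/
theorem stmt_5 (p q : ℝ) (hp : 0 < p) (hq : 0 < q) (t : ℝ) :
    (-(p * Real.log (1 + Real.exp (-t))) - q * Real.log (1 + Real.exp t)
        ≤ p * Real.log (p / (p + q)) + q * Real.log (q / (p + q))) ∧
    ((-(p * Real.log (1 + Real.exp (-t))) - q * Real.log (1 + Real.exp t)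
        = p * Real.log (p / (p + q)) + q * Real.log (q / (p + q)))
      ↔ t = Real.log (p / q)) := by
  set u := Real.exp t with hu
  have hu0 : 0 < u := Real.exp_pos t
  have hS : 0 < p + q := by linarith
  have h1u : (0:ℝ) < 1 + u := by linarith
  -- rewrite log (1 + exp (-t))
  have hA : Real.log (1 + Real.exp (-t)) = Real.log (1 + u) - Real.log u := by
    rw [Real.exp_neg, ← hu]
    have h : 1 + u⁻¹ = (1 + u) / u := by field_simp; ring
    rw [h, Real.log_div h1u.ne' hu0.ne']
  have hP : Real.log (p / (p + q)) = Real.log p - Real.log (p + q) :=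
    Real.log_div hp.ne' hS.ne'
  have hQ : Real.log (q / (p + q)) = Real.log q - Real.log (p + q) :=
    Real.log_div hq.ne' hS.ne'
  -- Gibbs setup
  set x := u * (p + q) / (p * (1 + u)) with hxdef
  set y := (p + q) / (q * (1 + u)) with hydef
  have hx0 : 0 < x := by positivity
  have hy0 : 0 < y := by positivity
  have hsum : p * x + q * y = p + q := by
    rw [hxdef, hydef]; field_simp; ring
  have hlx : Real.log x = Real.log u + Real.log (p + q) - Real.log p - Real.log (1 + u) := by
    rw [hxdef, Real.log_div (by positivity) (by positivity),
      Real.log_mul hu0.ne' hS.ne', Real.log_mul hp.ne' h1u.ne']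
    ring
  have hly : Real.log y = Real.log (p + q) - Real.log q - Real.log (1 + u) := by
    rw [hydef, Real.log_div hS.ne' (by positivity), Real.log_mul hq.ne' h1u.ne']
    ring
  obtain ⟨hle, hlt⟩ := gibbs_aux p q x y hp hq hx0 hy0 hsum
  constructor
  · rw [hA, hP, hQ]
    rw [hlx, hly] at hle
    nlinarith [hle]
  · constructor
    · intro heq
      by_contra hne
      -- t ≠ log (p/q) means u ≠ p/q, hence x ≠ 1
      have hune : u * q ≠ p := by
        intro h
        apply hne
        have : u = p / q := by field_simp; linarith [h]
        rw [hu] at this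
        rw [← this, Real.log_exp]
      have hxne : x ≠ 1 := by
        intro h
        apply hune
        rw [hxdef] at h
        have h' : u * (p + q) = p * (1 + u) := by
          field_simp at h; linarith [h]
        nlinarith [h']
      have := hlt hxne
      rw [hlx, hly] at this
      rw [hA, hP, hQ] at heq
      nlinarith [this]
    · intro heq
      subst heq
      have hpq : (0:ℝ) < p / q := by positivity
      have hu1 : u = p / q := by rw [hu, Real.exp_log hpq]
      have he1 : Real.exp (-Real.log (p / q)) = q / p := by
        rw [Real.exp_neg, Real.exp_log hpq, inv_div]
      rw [hA, hP, hQ, hu1]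
      have h1 : Real.log (1 + p / q) = Real.log (p + q) - Real.log q := by
        have : 1 + p / q = (p + q) / q := by field_simp; ring
        rw [this, Real.log_div hS.ne' hq.ne']
      have h2 : Real.log (p / q) = Real.log p - Real.log q := Real.log_div hp.ne' hq.ne'
      rw [h1, h2]
      ring
end

section
/- Let n ≥ 1 be a natural number and let a : Fin n × Fin n → ℝ be any array of real numbers. Then (1/n) ∑_{i=1}^{n} log( e^{a(i,i)} / ((1/n) ∑_{j=1}^{n} e^{a(i,j)}) ) ≤ log n. (The Contrastive Predictive Coding objective is upper bounded by log of the batch size.) -/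
/-- The Contrastive Predictive Coding objective is upper bounded by the log of the
batch size: for `n ≥ 1` and any array `a : Fin n × Fin n → ℝ`,
`(1/n) ∑ᵢ log (e^{a(i,i)} / ((1/n) ∑ⱼ e^{a(i,j)})) ≤ log n`. -/
theorem stmt_11 (n : ℕ) (hn : 1 ≤ n) (a : Fin n × Fin n → ℝ) :
    (1 / n : ℝ) * ∑ i : Fin n,
        Real.log (Real.exp (a (i, i)) / ((1 / n : ℝ) * ∑ j : Fin n, Real.exp (a (i, j))))
      ≤ Real.log n := by
  have hn0 : (0 : ℝ) < n := by exact_mod_cast hn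
  have key : ∀ i : Fin n,
      Real.log (Real.exp (a (i, i)) / ((1 / n : ℝ) * ∑ j : Fin n, Real.exp (a (i, j))))
        ≤ Real.log n := by
    intro i
    have hS : Real.exp (a (i, i)) ≤ ∑ j : Fin n, Real.exp (a (i, j)) :=
      Finset.single_le_sum (f := fun j => Real.exp (a (i, j))) (fun j _ => (Real.exp_pos _).le) (Finset.mem_univ i)
    have hSpos : 0 < ∑ j : Fin n, Real.exp (a (i, j)) :=
      Finset.sum_pos (fun j _ => Real.exp_pos _) ⟨i, Finset.mem_univ i⟩
    have hle : Real.exp (a (i, i)) / ((1 / n : ℝ) * ∑ j : Fin n, Real.exp (a (i, j))) ≤ n := by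
      rw [div_le_iff₀ (by positivity)]
      have : (n : ℝ) * ((1 / n : ℝ) * ∑ j : Fin n, Real.exp (a (i, j)))
          = ∑ j : Fin n, Real.exp (a (i, j)) := by
        field_simp
      rw [this]; exact hS
    exact Real.log_le_log (by positivity) hle
  have hsum : ∑ i : Fin n,
      Real.log (Real.exp (a (i, i)) / ((1 / n : ℝ) * ∑ j : Fin n, Real.exp (a (i, j))))
      ≤ n * Real.log n := by
    calc _ ≤ ∑ _i : Fin n, Real.log n := Finset.sum_le_sum fun i _ => key i
    _ = n * Real.log n := by simp [Finset.sum_const, nsmul_eq_mul]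
  calc (1 / n : ℝ) * _ ≤ (1 / n : ℝ) * (n * Real.log n) := by
        apply mul_le_mul_of_nonneg_left hsum (by positivity)
  _ = Real.log n := by field_simp
end

section
/- Let X be a random variable with values in 𝒳 and let Y₁, …, Yₙ be independent identically distributed random variables with values in 𝒴, jointly independent of X. Let c : 𝒳 × 𝒴 → ℝ be a bounded measurable function. Then for every i ∈ {1, …, n}, E[ e^{c(X, Y_i)} / ((1/n) ∑_{j=1}^{n} e^{c(X, Y_j)}) ] = 1. (Symmetry identity used in proving that CPC lower bounds mutual information.) -/
open MeasureTheory ProbabilityTheory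

/-- Symmetry identity used in proving that CPC lower bounds mutual information:
if `Y₁, …, Yₙ` are i.i.d. and jointly independent of `X`, and `c` is bounded measurable,
then for every `i`, `E[ e^{c(X, Yᵢ)} / ((1/n) ∑ⱼ e^{c(X, Yⱼ)}) ] = 1`. -/
theorem stmt_12 {Ω 𝒳 𝒴 : Type*} [MeasurableSpace Ω] [MeasurableSpace 𝒳] [MeasurableSpace 𝒴]
    (μ : Measure Ω) [IsProbabilityMeasure μ] (n : ℕ)
    (X : Ω → 𝒳) (Y : Fin n → Ω → 𝒴)
    (hX : Measurable X) (hY : ∀ i, Measurable (Y i))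
    (hYindep : iIndepFun Y μ)
    (hYident : ∀ i j, μ.map (Y i) = μ.map (Y j))
    (hXYindep : IndepFun X (fun ω i => Y i ω) μ)
    (c : 𝒳 → 𝒴 → ℝ) (hc : Measurable (Function.uncurry c))
    (C : ℝ) (hbound : ∀ x y, |c x y| ≤ C)
    (i : Fin n) :
    ∫ ω, Real.exp (c (X ω) (Y i ω)) /
        ((1 / n : ℝ) * ∑ j : Fin n, Real.exp (c (X ω) (Y j ω))) ∂μ = 1 := by
  classical
  have hn : 0 < (n : ℝ) := by
    have : 0 < n := i.pos
    exact_mod_cast this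
  -- the vector of Y's
  set Yv : Ω → Fin n → 𝒴 := fun ω j => Y j ω with hYv
  have hYvm : Measurable Yv := measurable_pi_lambda _ hY
  haveI : ∀ j, IsProbabilityMeasure (μ.map (Y j)) :=
    fun j => Measure.isProbabilityMeasure_map (hY j).aemeasurable
  set π : Measure (Fin n → 𝒴) := Measure.pi (fun j => μ.map (Y j)) with hπdef
  -- the law of Yv is the product measure
  have hπ : μ.map Yv = π := by
    rw [hπdef]
    refine (Measure.pi_eq (μ := fun j => μ.map (Y j)) fun s hs => ?_).symm
    rw [Measure.map_apply hYvm (MeasurableSet.univ_pi hs)]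
    have hpre : Yv ⁻¹' Set.univ.pi s = ⋂ j ∈ Finset.univ, Y j ⁻¹' s j := by
      ext ω; simp [Set.mem_pi, Yv]
    rw [hpre, hYindep.measure_inter_preimage_eq_mul Finset.univ (fun j _ => hs j)]
    refine Finset.prod_congr rfl fun j _ => ?_
    rw [Measure.map_apply (hY j) (hs j)]
  set mX : Measure 𝒳 := μ.map X with hmX
  haveI : IsProbabilityMeasure mX := Measure.isProbabilityMeasure_map hX.aemeasurable
  set ν : Measure (𝒳 × (Fin n → 𝒴)) := mX.prod π with hνdef
  haveI : IsProbabilityMeasure ν := by infer_instance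
  -- law of (X, Yv) is ν
  have hXYv : Measurable (fun ω => (X ω, Yv ω)) := hX.prodMk hYvm
  have hν : μ.map (fun ω => (X ω, Yv ω)) = ν := by
    rw [hνdef, hmX, ← hπ]
    exact (indepFun_iff_map_prod_eq_prod_map_map hX.aemeasurable hYvm.aemeasurable).mp hXYindep
  -- the functions
  set g : Fin n → 𝒳 × (Fin n → 𝒴) → ℝ := fun k p =>
    Real.exp (c p.1 (p.2 k)) / ((1 / n : ℝ) * ∑ j : Fin n, Real.exp (c p.1 (p.2 j))) with hg
  have hmexp : ∀ k : Fin n, Measurable fun p : 𝒳 × (Fin n → 𝒴) => Real.exp (c p.1 (p.2 k)) :=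
    fun k => (Real.measurable_exp.comp
      (hc.comp (measurable_fst.prodMk ((measurable_pi_apply k).comp measurable_snd))))
  have hmg : ∀ k, Measurable (g k) := fun k =>
    (hmexp k).div (measurable_const.mul (Finset.measurable_sum _ fun j _ => hmexp j))
  -- denominator bound
  have hDpos : ∀ p : 𝒳 × (Fin n → 𝒴),
      Real.exp (-C) ≤ (1 / n : ℝ) * ∑ j : Fin n, Real.exp (c p.1 (p.2 j)) := by
    intro p
    have hterm : ∀ j : Fin n, Real.exp (-C) ≤ Real.exp (c p.1 (p.2 j)) := fun j =>
      Real.exp_le_exp.mpr (neg_le_of_abs_le (hbound _ _))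
    have hsum : (n : ℝ) * Real.exp (-C) ≤ ∑ j : Fin n, Real.exp (c p.1 (p.2 j)) := by
      calc (n : ℝ) * Real.exp (-C) = ∑ _j : Fin n, Real.exp (-C) := by
            simp [Finset.sum_const, mul_comm]
        _ ≤ _ := Finset.sum_le_sum fun j _ => hterm j
    calc Real.exp (-C) = (1 / n : ℝ) * ((n : ℝ) * Real.exp (-C)) := by
          field_simp
      _ ≤ _ := by
          apply mul_le_mul_of_nonneg_left hsum
          positivity
  have hgbound : ∀ k, ∀ p, ‖g k p‖ ≤ Real.exp C / Real.exp (-C) := by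
    intro k p
    have hD := hDpos p
    have hDpos' : (0:ℝ) < (1 / n : ℝ) * ∑ j : Fin n, Real.exp (c p.1 (p.2 j)) :=
      lt_of_lt_of_le (Real.exp_pos _) hD
    have hnum : Real.exp (c p.1 (p.2 k)) ≤ Real.exp C :=
      Real.exp_le_exp.mpr (le_of_abs_le (hbound _ _))
    rw [hg]
    simp only [Real.norm_eq_abs]
    rw [abs_of_nonneg (div_nonneg (Real.exp_pos _).le hDpos'.le)]
    exact div_le_div₀ (Real.exp_pos C).le hnum (Real.exp_pos _) hD
  have hint : ∀ k, Integrable (g k) ν := by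
    intro k
    refine Integrable.mono' (integrable_const (Real.exp C / Real.exp (-C)))
      (hmg k).aestronglyMeasurable (Filter.Eventually.of_forall (hgbound k))
  -- swap invariance: each component integral equals the i-th one
  have hswap : ∀ k : Fin n, ∫ p, g k p ∂ν = ∫ p, g i p ∂ν := by
    intro k
    have hecoe : ⇑(MeasurableEquiv.piCongrLeft (fun _ : Fin n => 𝒴) (Equiv.swap i k))
        = fun (y : Fin n → 𝒴) (m : Fin n) => y (Equiv.swap i k m) := by
      funext y m
      have h := MeasurableEquiv.piCongrLeft_apply_apply (Equiv.swap i k)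
        (β := fun _ : Fin n => 𝒴) y (Equiv.swap i k m)
      simpa using h
    set t : (Fin n → 𝒴) → (Fin n → 𝒴) := fun y m => y (Equiv.swap i k m) with ht
    have hep : MeasurePreserving t π π := by
      have h1 := measurePreserving_piCongrLeft (fun j => μ.map (Y j)) (Equiv.swap i k)
      have h2 : Measure.pi (fun j => μ.map (Y (Equiv.swap i k j))) = π := by
        rw [hπdef]; congr 1; funext j; exact hYident _ _
      rw [h2, hecoe] at h1
      exact h1
    have hT : MeasurePreserving (Prod.map (id : 𝒳 → 𝒳) t) ν ν :=
      (MeasurePreserving.id mX).prod hep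
    have hmap : ν.map (Prod.map (id : 𝒳 → 𝒳) t) = ν := hT.map_eq
    calc ∫ p, g k p ∂ν = ∫ p, g k p ∂(ν.map (Prod.map (id : 𝒳 → 𝒳) t)) := by rw [hmap]
      _ = ∫ p, g k (Prod.map (id : 𝒳 → 𝒳) t p) ∂ν :=
          integral_map hT.measurable.aemeasurable (hmg k).aestronglyMeasurable
      _ = ∫ p, g i p ∂ν := by
          refine integral_congr_ae (Filter.Eventually.of_forall fun p => ?_)
          rw [hg]
          simp only [Prod.map_fst, Prod.map_snd, id_eq, ht]
          have h2 : ∑ j : Fin n, Real.exp (c p.1 (p.2 (Equiv.swap i k j)))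
              = ∑ j : Fin n, Real.exp (c p.1 (p.2 j)) :=
            Fintype.sum_equiv (Equiv.swap i k) _ _ (fun j => rfl)
          rw [h2, Equiv.swap_apply_right]
  -- sum of all component integrals is n
  have hsumint : ∑ k : Fin n, ∫ p, g k p ∂ν = n := by
    rw [← integral_finset_sum _ (fun k _ => hint k)]
    have : ∀ p : 𝒳 × (Fin n → 𝒴), ∑ k : Fin n, g k p = n := by
      intro p
      have hDpos' : (0:ℝ) < (1 / n : ℝ) * ∑ j : Fin n, Real.exp (c p.1 (p.2 j)) :=
        lt_of_lt_of_le (Real.exp_pos _) (hDpos p)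
      rw [hg]
      simp only
      rw [← Finset.sum_div]
      rw [div_eq_iff hDpos'.ne', one_div, ← mul_assoc, mul_inv_cancel₀ hn.ne', one_mul]
    rw [integral_congr_ae (Filter.Eventually.of_forall this)]
    simp
  have hsum2 : (n : ℝ) * ∫ p, g i p ∂ν = n := by
    calc (n : ℝ) * ∫ p, g i p ∂ν = ∑ k : Fin n, ∫ p, g i p ∂ν := by
          simp [Finset.sum_const, mul_comm]
      _ = ∑ k : Fin n, ∫ p, g k p ∂ν := Finset.sum_congr rfl fun k _ => (hswap k).symm
      _ = n := hsumint
  have hIi : ∫ p, g i p ∂ν = 1 :=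
    mul_left_cancel₀ hn.ne' (by rw [hsum2, mul_one])
  -- transfer back to μ
  calc ∫ ω, Real.exp (c (X ω) (Y i ω)) /
        ((1 / n : ℝ) * ∑ j : Fin n, Real.exp (c (X ω) (Y j ω))) ∂μ
      = ∫ ω, g i (X ω, Yv ω) ∂μ := by rfl
    _ = ∫ p, g i p ∂(μ.map (fun ω => (X ω, Yv ω))) :=
        (integral_map hXYv.aemeasurable (hmg i).aestronglyMeasurable).symm
    _ = 1 := by rw [hν, hIi]
end

section
/- Let Θ ⊆ ℝ^d and let {r_θ : 𝒳 × 𝒴 → (0, ∞)}_{θ∈Θ} satisfy Assumptions 1 (boundedness, with M := C_u − C_l) and 2 (log-smoothness with constant ρ > 0). Let P be a probability measure on 𝒳 × 𝒴 with marginals P_X, P_Y, absolutely continuous with respect to P_X ⊗ P_Y, and with mutual information I(X;Y) = KL(P ‖ P_X ⊗ P_Y) < ∞. Let ε > 0, suppose θ₁, …, θ_T ∈ Θ cover Θ by Euclidean balls of radius ε/(8ρ), and suppose there exists θ* ∈ Θ with |∫ log r_{θ*} dP − I(X;Y)| ≤ ε/2. Then for an i.i.d. sample S = ((X₁,Y₁),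 …, (Xₙ,Yₙ)) with law P, with probability at least 1 − 2T·exp(−nε²/(8M²)), the empirical estimator satisfies |Î_{θ*}^{(n)} − I(X;Y)| ≤ ε, where Î_{θ*}^{(n)} = (1/n) ∑_{i=1}^{n} log r_{θ*}(X_i, Y_i). (Quantitative form of the main theorem combining estimation and approximation errors.) -/
open MeasureTheory


open MeasureTheory Real

lemma mgf_bound_aux {Ω : Type*} [MeasurableSpace Ω] (P : Measure Ω) [IsProbabilityMeasure P]
    (g : Ω → ℝ) (hg : Measurable g) (c t : ℝ) (hc : 0 < c) (ht : 0 ≤ t)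
    (hgb : ∀ ω, |g ω| ≤ c) (hmean : ∫ ω, g ω ∂P = 0) :
    ∫ ω, exp (t * g ω) ∂P ≤ exp (t ^ 2 * c ^ 2 / 2) := by
  have hc0 : c ≠ 0 := hc.ne'
  have hpt : ∀ ω, exp (t * g ω) ≤ cosh (t * c) + (g ω / c) * sinh (t * c) := by
    intro ω
    set y := g ω with hy
    have hyb : |y| ≤ c := hgb ω
    have hy1 : -c ≤ y := (abs_le.1 hyb).1
    have hy2 : y ≤ c := (abs_le.1 hyb).2
    have ha : (0:ℝ) ≤ (y + c) / (2 * c) := div_nonneg (by linarith) (by linarith)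
    have hb : (0:ℝ) ≤ (c - y) / (2 * c) := by
      apply div_nonneg (by linarith) (by linarith)
    have hab : (y + c) / (2 * c) + (c - y) / (2 * c) = 1 := by field_simp; ring
    have hconv := convexOn_exp.2 (Set.mem_univ (t * c)) (Set.mem_univ (-(t * c))) ha hb hab
    have harg : ((y + c) / (2 * c)) • (t * c) + ((c - y) / (2 * c)) • (-(t * c)) = t * y := by
      simp only [smul_eq_mul]
      rw [div_mul_eq_mul_div, div_mul_eq_mul_div, ← add_div,
        div_eq_iff (by positivity : (2:ℝ) * c ≠ 0)]
      ring
    rw [harg] at hconv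
    calc exp (t * y) ≤ ((y + c) / (2 * c)) • exp (t * c) + ((c - y) / (2 * c)) • exp (-(t * c)) := hconv
      _ = cosh (t * c) + (y / c) * sinh (t * c) := by
          rw [Real.cosh_eq, Real.sinh_eq]; simp only [smul_eq_mul]; field_simp; ring
  have hgint : Integrable g P := by
    refine Integrable.mono' (integrable_const c) hg.aestronglyMeasurable (ae_of_all _ fun ω => ?_)
    simpa [Real.norm_eq_abs] using hgb ω
  have hi1 : Integrable (fun ω => exp (t * g ω)) P := by
    refine Integrable.mono' (integrable_const (exp (t * c))) ((hg.const_mul t).exp).aestronglyMeasurable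
      (ae_of_all _ fun ω => ?_)
    rw [Real.norm_eq_abs, abs_of_pos (exp_pos _)]
    exact exp_le_exp.2 (mul_le_mul_of_nonneg_left (abs_le.1 (hgb ω)).2 ht)
  have hi2 : Integrable (fun ω => cosh (t * c) + (g ω / c) * sinh (t * c)) P :=
    (integrable_const _).add ((hgint.div_const c).mul_const _)
  calc ∫ ω, exp (t * g ω) ∂P ≤ ∫ ω, (cosh (t * c) + (g ω / c) * sinh (t * c)) ∂P :=
        integral_mono hi1 hi2 hpt
    _ = cosh (t * c) := by
        rw [integral_add (integrable_const _) ((hgint.div_const c).mul_const _),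
          integral_const, integral_mul_const, integral_div, hmean]
        simp
    _ ≤ exp ((t * c) ^ 2 / 2) := Real.cosh_le_exp_half_sq _
    _ = exp (t ^ 2 * c ^ 2 / 2) := by rw [mul_pow]

lemma hoeffding_aux {Ω : Type*} [MeasurableSpace Ω] (P : Measure Ω) [IsProbabilityMeasure P]
    (g : Ω → ℝ) (hg : Measurable g) (c : ℝ) (hc : 0 < c)
    (hgb : ∀ ω, |g ω| ≤ c) (hmean : ∫ ω, g ω ∂P = 0) (n : ℕ) (s : ℝ) (hs : 0 < s) :
    (Measure.pi fun _ : Fin n => P) {x | (n : ℝ) * s ≤ ∑ i : Fin n, g (x i)}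
      ≤ ENNReal.ofReal (Real.exp (-((n : ℝ) * s ^ 2) / (2 * c ^ 2))) := by
  have hc0 : c ≠ 0 := hc.ne'
  letI : MeasureSpace Ω := ⟨P⟩
  haveI : SigmaFinite (volume : Measure Ω) := (by infer_instance : SigmaFinite P)
  set t := s / c ^ 2 with htdef
  have ht0 : 0 < t := div_pos hs (pow_pos hc 2)
  have hmgf := mgf_bound_aux P g hg c t hc ht0.le hgb hmean
  set μn := (Measure.pi fun _ : Fin n => P) with hμn
  haveI : IsProbabilityMeasure μn := by rw [hμn]; infer_instance
  set F : (Fin n → Ω) → ℝ := fun x => ∏ i : Fin n, exp (t * g (x i)) with hF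
  have hFnonneg : ∀ x, 0 ≤ F x := fun x => Finset.prod_nonneg fun i _ => (exp_pos _).le
  have hFmeas : Measurable F :=
    Finset.measurable_prod _ fun i _ => ((hg.comp (measurable_pi_apply i)).const_mul t).exp
  have hFint : Integrable F μn := by
    refine Integrable.mono' (integrable_const (exp (t * c) ^ n)) hFmeas.aestronglyMeasurable
      (ae_of_all _ fun x => ?_)
    rw [Real.norm_eq_abs, abs_of_nonneg (hFnonneg x)]
    calc F x ≤ ∏ _i : Fin n, exp (t * c) := by
          refine Finset.prod_le_prod (fun i _ => (exp_pos _).le) (fun i _ => ?_)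
          exact exp_le_exp.2 (mul_le_mul_of_nonneg_left (abs_le.1 (hgb (x i))).2 ht0.le)
      _ = exp (t * c) ^ n := by simp
  have hFeq : ∀ x, F x = exp (t * ∑ i : Fin n, g (x i)) := by
    intro x
    rw [Finset.mul_sum, Real.exp_sum]
  have hset : {x : Fin n → Ω | (n : ℝ) * s ≤ ∑ i : Fin n, g (x i)}
      = {x | exp (t * ((n : ℝ) * s)) ≤ F x} := by
    ext x
    simp only [Set.mem_setOf_eq, hFeq, exp_le_exp]
    exact (mul_le_mul_iff_right₀ ht0).symm
  have hFint_eq : ∫ x, F x ∂μn = (∫ ω, exp (t * g ω) ∂P) ^ n := by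
    have h := MeasureTheory.integral_fintype_prod_eq_pow (𝕜 := ℝ) (ι := Fin n)
      (fun ω => exp (t * g ω)) (μ := P)
    simpa using h
  have hmark := mul_meas_ge_le_integral_of_nonneg (μ := μn)
    (ae_of_all _ hFnonneg) hFint (exp (t * ((n : ℝ) * s)))
  rw [hset]
  have hInonneg : 0 ≤ ∫ ω, exp (t * g ω) ∂P := integral_nonneg fun ω => (exp_pos _).le
  have hchain : exp (t * ((n : ℝ) * s)) * (μn {x | exp (t * ((n : ℝ) * s)) ≤ F x}).toReal
      ≤ exp (t ^ 2 * c ^ 2 / 2) ^ n := by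
    refine hmark.trans ?_
    rw [hFint_eq]
    exact pow_le_pow_left₀ hInonneg hmgf n
  have htoReal : (μn {x | exp (t * ((n : ℝ) * s)) ≤ F x}).toReal
      ≤ exp (-((n : ℝ) * s ^ 2) / (2 * c ^ 2)) := by
    have h2 : (μn {x | exp (t * ((n : ℝ) * s)) ≤ F x}).toReal
        ≤ exp (t ^ 2 * c ^ 2 / 2) ^ n / exp (t * ((n : ℝ) * s)) := by
      rw [le_div_iff₀ (exp_pos _)]
      linarith [hchain]
    refine h2.trans_eq ?_
    rw [← Real.exp_nat_mul, ← Real.exp_sub]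
    congr 1
    rw [htdef]
    field_simp
    ring
  exact (ENNReal.le_ofReal_iff_toReal_le (measure_ne_top _ _) (exp_pos _).le).2 htoReal

/-- Quantitative form of the main theorem combining estimation and approximation errors:
under boundedness (`M = C_u − C_l`) and log-smoothness (constant `ρ`), if `Θ` is covered
by `T` Euclidean balls of radius `ε/(8ρ)` with centers in `Θ` and `θ* ∈ Θ` approximates
the mutual information `I(X;Y) = ∫ log (dP/d(P_X ⊗ P_Y)) dP` to within `ε/2`, then with
probability at least `1 − 2T exp(−nε²/(8M²))` over an i.i.d. sample of size `n` from
`P`, the empirical estimator `Î_{θ*}^{(n)} = (1/n) ∑ᵢ log r_{θ*}(Xᵢ,Yᵢ)` satisfies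
`|Î_{θ*}^{(n)} − I(X;Y)| ≤ ε`. -/
theorem stmt_18 {𝒳 𝒴 : Type*} [MeasurableSpace 𝒳] [MeasurableSpace 𝒴] {d : ℕ}
    (Θ : Set (EuclideanSpace ℝ (Fin d)))
    (r : EuclideanSpace ℝ (Fin d) → 𝒳 × 𝒴 → ℝ)
    (hrpos : ∀ θ z, 0 < r θ z)
    (hrmeas : ∀ θ, Measurable (r θ))
    (Cl Cu : ℝ) (hC : Cl ≤ Cu)
    (hbound : ∀ θ ∈ Θ, ∀ z, Cl ≤ Real.log (r θ z) ∧ Real.log (r θ z) ≤ Cu)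
    (ρ : ℝ) (hρ : 0 < ρ)
    (hsmooth : ∀ z, ∀ θ₁ ∈ Θ, ∀ θ₂ ∈ Θ,
      |Real.log (r θ₁ z) - Real.log (r θ₂ z)| ≤ ρ * ‖θ₁ - θ₂‖)
    (P : Measure (𝒳 × 𝒴)) [IsProbabilityMeasure P]
    (hac : P ≪ (P.map Prod.fst).prod (P.map Prod.snd))
    (hKLint : Integrable (fun z =>
      Real.log ((P.rnDeriv ((P.map Prod.fst).prod (P.map Prod.snd)) z).toReal)) P)
    (ε : ℝ) (hε : 0 < ε)
    (T : ℕ) (θc : Fin T → EuclideanSpace ℝ (Fin d)) (hθc : ∀ k, θc k ∈ Θ)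
    (hcover : Θ ⊆ ⋃ k : Fin T, Metric.closedBall (θc k) (ε / (8 * ρ)))
    (θstar : EuclideanSpace ℝ (Fin d)) (hθstar : θstar ∈ Θ)
    (happrox : |(∫ z, Real.log (r θstar z) ∂P)
        - ∫ z, Real.log ((P.rnDeriv ((P.map Prod.fst).prod (P.map Prod.snd)) z).toReal) ∂P|
      ≤ ε / 2)
    (n : ℕ) :
    1 - ENNReal.ofReal (2 * T * Real.exp (-(n * ε ^ 2) / (8 * (Cu - Cl) ^ 2)))
      ≤ (Measure.pi fun _ : Fin n => P)
          {s | |(1 / n : ℝ) * ∑ i : Fin n, Real.log (r θstar (s i))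
                  - ∫ z, Real.log
                      ((P.rnDeriv ((P.map Prod.fst).prod (P.map Prod.snd)) z).toReal) ∂P|
              ≤ ε} := by
  classical
  set IXY : ℝ :=
    ∫ z, Real.log ((P.rnDeriv ((P.map Prod.fst).prod (P.map Prod.snd)) z).toReal) ∂P with hIXY
  by_cases htriv : 1 ≤ ENNReal.ofReal (2 * T * Real.exp (-(n * ε ^ 2) / (8 * (Cu - Cl) ^ 2)))
  · rw [tsub_eq_zero_of_le htriv]; exact zero_le
  have hlt : 2 * T * Real.exp (-(n * ε ^ 2) / (8 * (Cu - Cl) ^ 2)) < 1 := by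
    by_contra h
    push_neg at h
    exact htriv (ENNReal.one_le_ofReal.2 h)
  -- T ≥ 1
  have hTmem := hcover hθstar
  rw [Set.mem_iUnion] at hTmem
  obtain ⟨k, -⟩ := hTmem
  have hT1 : (1 : ℝ) ≤ T := by exact_mod_cast k.pos
  -- c := Cu - Cl > 0
  have hc : 0 < Cu - Cl := by
    rcases lt_or_eq_of_le (sub_nonneg.2 hC) with h | h
    · exact h
    · exfalso
      rw [← h] at hlt
      simp only [← h, ne_eq, OfNat.ofNat_ne_zero, not_false_eq_true, zero_pow, mul_zero,
        div_zero, Real.exp_zero, mul_one] at hlt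
      nlinarith
  -- n ≥ 1
  have hn : 0 < n := by
    rcases Nat.eq_zero_or_pos n with h | h
    · exfalso
      rw [h] at hlt
      simp only [Nat.cast_zero, zero_mul, neg_zero, zero_div, Real.exp_zero, mul_one] at hlt
      nlinarith
    · exact h
  have hn0 : (0 : ℝ) < n := by exact_mod_cast hn
  set f : 𝒳 × 𝒴 → ℝ := fun z => Real.log (r θstar z) with hf
  have hfmeas : Measurable f := Real.measurable_log.comp (hrmeas θstar)
  have hfb : ∀ z, Cl ≤ f z ∧ f z ≤ Cu := hbound θstar hθstar
  have hfint : Integrable f P := by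
    refine Integrable.mono' (integrable_const (max |Cl| |Cu|)) hfmeas.aestronglyMeasurable
      (ae_of_all _ fun z => ?_)
    rw [Real.norm_eq_abs]
    exact abs_le_max_abs_abs (hfb z).1 (hfb z).2
  set μf : ℝ := ∫ z, f z ∂P with hμf
  have hμl : Cl ≤ μf := by
    have := integral_mono (integrable_const Cl) hfint (fun z => (hfb z).1)
    simpa using this
  have hμu : μf ≤ Cu := by
    have := integral_mono hfint (integrable_const Cu) (fun z => (hfb z).2)
    simpa using this
  set g : 𝒳 × 𝒴 → ℝ := fun z => f z - μf with hg
  have hgmeas : Measurable g := hfmeas.sub measurable_const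
  have hgint : Integrable g P := hfint.sub (integrable_const μf)
  have hmean : ∫ z, g z ∂P = 0 := by
    rw [hg]
    rw [integral_sub hfint (integrable_const μf)]
    simp [hμf]
  have hgb : ∀ z, |g z| ≤ Cu - Cl := fun z =>
    abs_le.2 ⟨by have := (hfb z).1; simp only [hg]; linarith, by have := (hfb z).2; simp only [hg]; linarith⟩
  have hngb : ∀ z, |(fun w => -g w) z| ≤ Cu - Cl := fun z => by
    simpa [abs_neg] using hgb z
  have hnmean : ∫ z, (fun w => -g w) z ∂P = 0 := by
    rw [integral_neg, hmean, neg_zero]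
  set μn := (Measure.pi fun _ : Fin n => P) with hμn
  haveI : IsProbabilityMeasure μn := by rw [hμn]; infer_instance
  have hplus := hoeffding_aux P g hgmeas (Cu - Cl) hc hgb hmean n (ε / 2) (half_pos hε)
  have hminus := hoeffding_aux P (fun w => -g w) hgmeas.neg (Cu - Cl) hc hngb hnmean n
    (ε / 2) (half_pos hε)
  have hexp : -((n : ℝ) * (ε / 2) ^ 2) / (2 * (Cu - Cl) ^ 2)
      = -((n : ℝ) * ε ^ 2) / (8 * (Cu - Cl) ^ 2) := by
    rw [div_eq_div_iff (by positivity) (by positivity)]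
    ring
  rw [hexp] at hplus hminus
  -- the event and its measurability
  set A : Set (Fin n → 𝒳 × 𝒴) :=
    {s | |(1 / n : ℝ) * ∑ i : Fin n, Real.log (r θstar (s i)) - IXY| ≤ ε} with hA
  have hAmeas : MeasurableSet A := by
    have hm : Measurable fun x : Fin n → 𝒳 × 𝒴 =>
        |(1 / n : ℝ) * ∑ i : Fin n, Real.log (r θstar (x i)) - IXY| :=
      ((measurable_const.mul (Finset.measurable_sum _ fun i _ =>
        hfmeas.comp (measurable_pi_apply i))).sub measurable_const).abs
    exact measurableSet_le hm measurable_const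
  have hsub : Aᶜ ⊆ {x : Fin n → 𝒳 × 𝒴 | (n : ℝ) * (ε / 2) ≤ ∑ i : Fin n, g (x i)}
      ∪ {x : Fin n → 𝒳 × 𝒴 | (n : ℝ) * (ε / 2) ≤ ∑ i : Fin n, -g (x i)} := by
    intro x hx
    simp only [hA, Set.mem_compl_iff, Set.mem_setOf_eq, not_le] at hx
    have hsumg : ∑ i : Fin n, g (x i) = (∑ i : Fin n, f (x i)) - n * μf := by
      simp [hg, Finset.sum_sub_distrib, Finset.card_univ, mul_comm]
    have hw : (1 / n : ℝ) * ∑ i : Fin n, f (x i) - μf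
        = (1 / n : ℝ) * ∑ i : Fin n, g (x i) := by
      rw [hsumg]
      field_simp
    have h1 : ε / 2 < |(1 / n : ℝ) * ∑ i : Fin n, f (x i) - μf| := by
      have htri := abs_sub_le ((1 / n : ℝ) * ∑ i : Fin n, f (x i)) μf IXY
      have happ : |μf - IXY| ≤ ε / 2 := happrox
      have : ε < |(1 / n : ℝ) * ∑ i : Fin n, f (x i) - IXY| := hx
      linarith
    rw [hw] at h1
    rcases lt_abs.1 h1 with h2 | h2
    · left
      show (n : ℝ) * (ε / 2) ≤ ∑ i : Fin n, g (x i)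
      have h3 := mul_lt_mul_of_pos_left h2 hn0
      have h4 : (n : ℝ) * ((1 / n : ℝ) * ∑ i : Fin n, g (x i)) = ∑ i : Fin n, g (x i) := by
        field_simp
      rw [h4] at h3
      exact h3.le
    · right
      show (n : ℝ) * (ε / 2) ≤ ∑ i : Fin n, -g (x i)
      have h3 := mul_lt_mul_of_pos_left h2 hn0
      have h4 : (n : ℝ) * -((1 / n : ℝ) * ∑ i : Fin n, g (x i)) = ∑ i : Fin n, -g (x i) := by
        rw [Finset.sum_neg_distrib]
        field_simp
      rw [h4] at h3
      exact h3.le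
  have hAc : μn Aᶜ ≤ ENNReal.ofReal (2 * T * Real.exp (-(n * ε ^ 2) / (8 * (Cu - Cl) ^ 2))) := by
    calc μn Aᶜ ≤ μn ({x : Fin n → 𝒳 × 𝒴 | (n : ℝ) * (ε / 2) ≤ ∑ i : Fin n, g (x i)}
          ∪ {x : Fin n → 𝒳 × 𝒴 | (n : ℝ) * (ε / 2) ≤ ∑ i : Fin n, -g (x i)}) :=
        measure_mono hsub
      _ ≤ μn {x : Fin n → 𝒳 × 𝒴 | (n : ℝ) * (ε / 2) ≤ ∑ i : Fin n, g (x i)}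
          + μn {x : Fin n → 𝒳 × 𝒴 | (n : ℝ) * (ε / 2) ≤ ∑ i : Fin n, -g (x i)} :=
        measure_union_le _ _
      _ ≤ ENNReal.ofReal (Real.exp (-((n : ℝ) * ε ^ 2) / (8 * (Cu - Cl) ^ 2)))
          + ENNReal.ofReal (Real.exp (-((n : ℝ) * ε ^ 2) / (8 * (Cu - Cl) ^ 2))) :=
        add_le_add hplus hminus
      _ = ENNReal.ofReal (2 * Real.exp (-((n : ℝ) * ε ^ 2) / (8 * (Cu - Cl) ^ 2))) := by
        rw [← ENNReal.ofReal_add (Real.exp_pos _).le (Real.exp_pos _).le, two_mul]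
      _ ≤ ENNReal.ofReal (2 * T * Real.exp (-(n * ε ^ 2) / (8 * (Cu - Cl) ^ 2))) := by
        apply ENNReal.ofReal_le_ofReal
        have hepos := (Real.exp_pos (-((n : ℝ) * ε ^ 2) / (8 * (Cu - Cl) ^ 2))).le
        nlinarith
  calc 1 - ENNReal.ofReal (2 * T * Real.exp (-(n * ε ^ 2) / (8 * (Cu - Cl) ^ 2)))
      ≤ 1 - μn Aᶜ := tsub_le_tsub_left hAc 1
    _ = μn A := by
        rw [measure_compl hAmeas (measure_ne_top _ _), measure_univ,
          ENNReal.sub_sub_cancel ENNReal.one_ne_top prob_le_one]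
end
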